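/- For events X, Q, D with p(X ∩ Q ∩ D) > 0, the ratio of learning gain to contextual relevance, when the contextual relevance is nonzero, equals p(D|Q)/p(X|Q), and in particular this ratio is independent of p(X ∩ D | Q). -/
import Mathlib


open MeasureTheory Real

noncomputable def pcond {Ω : Type*} [MeasurableSpace Ω] (μ : Measure Ω) (A B : Set Ω) : ℝ :=
  (μ (A ∩ B)).toReal / (μ B).toReal

lemma key_ratio (a x d q : ℝ) (hx : 0 < x) (hd : 0 < d) (hq : 0 < q)
    (h : a / d - x / q ≠ 0) :
    (a / x - d / q) / (a / d - x / q) = (d / q) / (x / q) := by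
  have h' : a * q - x * d ≠ 0 := by
    intro hc
    apply h
    field_simp
    linarith
  have hN : a / x - d / q = (a * q - x * d) / (x * q) := div_sub_div _ _ hx.ne' hq.ne'
  have hD : a / d - x / q = (a * q - x * d) / (d * q) := by
    rw [div_sub_div _ _ hd.ne' hq.ne', mul_comm d x]
  have hR : d / q / (x / q) = d / x := by
    rw [div_div_div_comm, div_self hq.ne', div_one]
  rw [hN, hD, hR, div_div_div_comm, div_self h', one_div_div, mul_comm x q, mul_comm d q,
    mul_div_mul_left _ _ hq.ne']

lemma pconds {Ω : Type*} [MeasurableSpace Ω] (μ : Measure Ω) [IsProbabilityMeasure μ]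
    (X Q D : Set Ω) :
    pcond μ D (Q ∩ X) = (μ (X ∩ Q ∩ D)).toReal / (μ (X ∩ Q)).toReal ∧
    pcond μ D Q = (μ (D ∩ Q)).toReal / (μ Q).toReal ∧
    pcond μ X (Q ∩ D) = (μ (X ∩ Q ∩ D)).toReal / (μ (D ∩ Q)).toReal ∧
    pcond μ X Q = (μ (X ∩ Q)).toReal / (μ Q).toReal := by
  have e1 : D ∩ (Q ∩ X) = X ∩ Q ∩ D := by ext ω; simp [Set.mem_inter_iff]; tauto
  have e2 : Q ∩ X = X ∩ Q := Set.inter_comm _ _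
  have e3 : X ∩ (Q ∩ D) = X ∩ Q ∩ D := (Set.inter_assoc _ _ _).symm
  have e4 : Q ∩ D = D ∩ Q := Set.inter_comm _ _
  refine ⟨?_, rfl, ?_, rfl⟩
  · simp only [pcond]; rw [e1, e2]
  · simp only [pcond]; rw [e3, e4]

theorem stmt13 {Ω : Type*} [Fintype Ω] [MeasurableSpace Ω]
    (μ₁ μ₂ : Measure Ω) [IsProbabilityMeasure μ₁] [IsProbabilityMeasure μ₂]
    (X Q D : Set Ω)
    (h1 : 0 < (μ₁ (X ∩ Q ∩ D)).toReal) (h2 : 0 < (μ₂ (X ∩ Q ∩ D)).toReal)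
    (hQ1 : 0 < (μ₁ Q).toReal)
    (hagreeXQ : μ₁ (X ∩ Q) = μ₂ (X ∩ Q)) (hagreeDQ : μ₁ (D ∩ Q) = μ₂ (D ∩ Q))
    (hagreeQ : μ₁ Q = μ₂ Q)
    (hrel1 : pcond μ₁ X (Q ∩ D) - pcond μ₁ X Q ≠ 0)
    (hrel2 : pcond μ₂ X (Q ∩ D) - pcond μ₂ X Q ≠ 0) :
    (pcond μ₁ D (Q ∩ X) - pcond μ₁ D Q) / (pcond μ₁ X (Q ∩ D) - pcond μ₁ X Q) =
        pcond μ₁ D Q / pcond μ₁ X Q ∧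
      (pcond μ₁ D (Q ∩ X) - pcond μ₁ D Q) / (pcond μ₁ X (Q ∩ D) - pcond μ₁ X Q) =
        (pcond μ₂ D (Q ∩ X) - pcond μ₂ D Q) / (pcond μ₂ X (Q ∩ D) - pcond μ₂ X Q) := by
  obtain ⟨p1, p2, p3, p4⟩ := pconds μ₁ X Q D
  obtain ⟨q1, q2, q3, q4⟩ := pconds μ₂ X Q D
  have hmono : ∀ (μ : Measure Ω) [IsProbabilityMeasure μ], ∀ A B : Set Ω, A ⊆ B →
      (μ A).toReal ≤ (μ B).toReal := by
    intro μ _ A B hAB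
    exact ENNReal.toReal_mono (measure_ne_top μ B) (measure_mono hAB)
  have hx1 : 0 < (μ₁ (X ∩ Q)).toReal :=
    lt_of_lt_of_le h1 (hmono μ₁ _ _ Set.inter_subset_left)
  have hd1 : 0 < (μ₁ (D ∩ Q)).toReal :=
    lt_of_lt_of_le h1 (hmono μ₁ _ _ (fun ω hω => ⟨hω.2, hω.1.2⟩))
  have hx2 : 0 < (μ₂ (X ∩ Q)).toReal :=
    lt_of_lt_of_le h2 (hmono μ₂ _ _ Set.inter_subset_left)
  have hd2 : 0 < (μ₂ (D ∩ Q)).toReal :=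
    lt_of_lt_of_le h2 (hmono μ₂ _ _ (fun ω hω => ⟨hω.2, hω.1.2⟩))
  have hq2 : 0 < (μ₂ Q).toReal := hagreeQ ▸ hQ1
  rw [p3, p4] at hrel1
  rw [q3, q4] at hrel2
  rw [p1, p2, p3, p4, q1, q2, q3, q4]
  have k1 := key_ratio (μ₁ (X ∩ Q ∩ D)).toReal (μ₁ (X ∩ Q)).toReal (μ₁ (D ∩ Q)).toReal
    (μ₁ Q).toReal hx1 hd1 hQ1 hrel1
  have k2 := key_ratio (μ₂ (X ∩ Q ∩ D)).toReal (μ₂ (X ∩ Q)).toReal (μ₂ (D ∩ Q)).toReal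
    (μ₂ Q).toReal hx2 hd2 hq2 hrel2
  refine ⟨k1, ?_⟩
  rw [k1, k2, hagreeXQ, hagreeDQ, hagreeQ]
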